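/- arXiv:2510.08644 — 3 statements merged into one kernel-verified Lean document; each statement's English description precedes it below -/
import Mathlib

section
/- Let A ∈ ℂ^{N×N} with N = 2^n be s-sparse with s = 2^m and |A_{i,j}| ≤ 1 for all i,j, and let c(j,ℓ) give the row index of the ℓ-th nonzero entry of column j (extended so that ℓ ↦ c(j,ℓ) is a bijection on {0,…,s−1} positions and A_{c(j,ℓ),j} = 0 for padding entries). Suppose O_c is a unitary with O_c|ℓ⟩|j⟩ = |ℓ⟩|c(j,ℓ)⟩ and O_A is a unitary with O_A|0⟩|ℓ⟩|j⟩ = (A_{c(j,ℓ),j}|0⟩ + √(1−|A_{c(j,ℓ),j}|²)|1⟩)|ℓ⟩|j⟩. Then U_A = (I₂ ⊗ D_s ⊗ I_N)(I₂ ⊗ O_c) O_A (I₂ ⊗ D_s ⊗ I_N), where D_s = H^{⊗m} is the m-fold tensor power of the Hadamard gate, is an (s, m+1)-block-encoding of A, i.e., (⟨0^{m+1}| ⊗ I_N) U_A (|0^{m+1}⟩ ⊗ I_N) = A/s. -/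
open Kronecker

noncomputable section

/-- `m`-fold tensor power of the Hadamard gate, acting on `Fin (2^m)` via binary
indexing: entries `(1/√(2^m)) · (−1)^{⟨k,l⟩}` with `⟨k,l⟩` the bitwise inner product. -/
def hadamardPow (m : ℕ) : Matrix (Fin (2 ^ m)) (Fin (2 ^ m)) ℂ :=
  Matrix.of fun k l =>
    ((1 / Real.sqrt (2 ^ m) : ℝ) : ℂ) *
      (-1 : ℂ) ^ ((Finset.range m).filter
        (fun t => (k : ℕ).testBit t ∧ (l : ℕ).testBit t)).card

open Matrix

/-! The first row and column of `H^{⊗m}` are constant `1/√(2^m)`, so the `|0⟩|0^m⟩`-block of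
`U_A` is `2^{-m}` times the sum over all `ℓ, ℓ'` of the `(|0⟩|ℓ⟩, |0⟩|ℓ'⟩)`-blocks of
`(I₂ ⊗ O_c) O_A`. As `O_A` fixes `|ℓ⟩|j⟩` with amplitude `A_{c(j,ℓ),j}` on the flag `|0⟩` and
`O_c` moves `|ℓ⟩|j⟩` to `|ℓ⟩|c(j,ℓ)⟩`, the `(i, j)` entry of that block is `A_{i,j}` if `ℓ = ℓ'`
and `c(j,ℓ) = i`, and `0` otherwise. Since `c(j,·)` is injective and hits every row where
column `j` of `A` is nonzero, the sum is exactly `A_{i,j}`. -/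

lemma hadamardPow_apply_zero_left (m : ℕ) (k : Fin (2 ^ m)) :
    hadamardPow m ⟨0, pow_pos two_pos m⟩ k = ((1 / Real.sqrt (2 ^ m) : ℝ) : ℂ) := by
  simp [hadamardPow, Nat.zero_testBit]

lemma hadamardPow_apply_zero_right (m : ℕ) (k : Fin (2 ^ m)) :
    hadamardPow m k ⟨0, pow_pos two_pos m⟩ = ((1 / Real.sqrt (2 ^ m) : ℝ) : ℂ) := by
  simp [hadamardPow, Nat.zero_testBit]

lemma ofReal_one_div_sqrt_mul_self (m : ℕ) :
    ((1 / Real.sqrt (2 ^ m) : ℝ) : ℂ) * ((1 / Real.sqrt (2 ^ m) : ℝ) : ℂ) = 1 / 2 ^ m := by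
  rw [← Complex.ofReal_mul, div_mul_div_comm, one_mul, Real.mul_self_sqrt (by positivity)]
  push_cast
  rfl

section Kronecker

variable {R α ι κ : Type*} [CommSemiring R] [Fintype α] [DecidableEq α] [Fintype ι] [Fintype κ]

lemma kronecker_one_sandwich_apply [DecidableEq κ] (D : Matrix ι ι R)
    (M : Matrix (α × ι × κ) (α × ι × κ) R) (z : ι) (s : R) (hrow : ∀ k, D z k = s)
    (hcol : ∀ k, D k z = s) (a b : α) (i j : κ) :
    ((1 ⊗ₖ (D ⊗ₖ 1)) * M * (1 ⊗ₖ (D ⊗ₖ 1)) : Matrix (α × ι × κ) (α × ι × κ) R)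
        (a, (z, i)) (b, (z, j)) =
      s * s * ∑ ℓ, ∑ ℓ', M (a, (ℓ, i)) (b, (ℓ', j)) := by
  simp only [mul_apply, Fintype.sum_prod_type, kroneckerMap_apply, one_apply, hrow, hcol,
    mul_ite, ite_mul, one_mul, mul_one, zero_mul, mul_zero, Finset.sum_ite_irrel,
    Finset.sum_const_zero, Finset.sum_ite_eq, Finset.sum_ite_eq', Finset.mem_univ, if_true,
    Finset.mul_sum, Finset.sum_mul]
  rw [Finset.sum_comm]
  simp only [Finset.sum_ite_eq', Finset.mem_univ, if_true]
  rw [Finset.sum_comm]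
  refine Finset.sum_congr rfl fun ℓ _ => Finset.sum_congr rfl fun ℓ' _ => ?_
  ring

lemma one_kronecker_mul_apply (O : Matrix (ι × κ) (ι × κ) R)
    (N : Matrix (α × ι × κ) (α × ι × κ) R) (a : α) (x : ι × κ) (y : α × ι × κ) :
    (((1 : Matrix α α R) ⊗ₖ O) * N) (a, x) y = ∑ x', O x x' * N (a, x') y := by
  simp only [mul_apply, Fintype.sum_prod_type, kroneckerMap_apply, one_apply, ite_mul, one_mul,
    zero_mul, Finset.sum_ite_irrel, Finset.sum_const_zero, Finset.sum_ite_eq, Finset.mem_univ,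
    if_true]

end Kronecker

lemma sum_ite_eq_self_of_injective {ι κ R : Type*} [Fintype ι] [DecidableEq κ] [AddCommMonoid R]
    {f : ι → κ} (hf : Function.Injective f) {i : κ} {x : R} (hx : x ≠ 0 → ∃ ℓ, f ℓ = i) :
    ∑ ℓ, (if f ℓ = i then x else 0) = x := by
  by_cases hi : ∃ ℓ, f ℓ = i
  · obtain ⟨ℓ₀, rfl⟩ := hi
    rw [Fintype.sum_eq_single ℓ₀ fun ℓ hℓ => if_neg (hf.ne hℓ), if_pos rfl]
  · have hx0 : x = 0 := not_imp_comm.mp hx hi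
    simp [hx0]

/-- Block encoding of a sparse matrix: with `O_c |ℓ⟩|j⟩ = |ℓ⟩|c(j,ℓ)⟩` and
`O_A |0⟩|ℓ⟩|j⟩ = (A_{c(j,ℓ),j}|0⟩ + √(1−|A_{c(j,ℓ),j}|²)|1⟩)|ℓ⟩|j⟩`,
the unitary `U_A = (I₂ ⊗ D_s ⊗ I_N)(I₂ ⊗ O_c) O_A (I₂ ⊗ D_s ⊗ I_N)` is an
`(s, m+1)`-block-encoding of `A`, i.e. its top-left block equals `A/s`. -/
theorem sparse_block_encoding (n m : ℕ)
    (A : Matrix (Fin (2 ^ n)) (Fin (2 ^ n)) ℂ)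
    (c : Fin (2 ^ n) → Fin (2 ^ m) → Fin (2 ^ n))
    (hinj : ∀ j, Function.Injective (c j))
    (hcover : ∀ i j, A i j ≠ 0 → ∃ ℓ, c j ℓ = i)
    (Oc : Matrix (Fin (2 ^ m) × Fin (2 ^ n)) (Fin (2 ^ m) × Fin (2 ^ n)) ℂ)
    (hOc : ∀ w v, Oc w v = if w.1 = v.1 ∧ w.2 = c v.2 v.1 then 1 else 0)
    (OA : Matrix (Fin 2 × (Fin (2 ^ m) × Fin (2 ^ n)))
      (Fin 2 × (Fin (2 ^ m) × Fin (2 ^ n))) ℂ)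
    (hOA : ∀ ℓ j, OA.mulVec (fun w => if w = (0, (ℓ, j)) then 1 else 0) =
      fun w =>
        (if w = (0, (ℓ, j)) then A (c j ℓ) j else 0) +
        (if w = (1, (ℓ, j)) then
          ((Real.sqrt (1 - ‖A (c j ℓ) j‖ ^ 2) : ℝ) : ℂ) else 0)) :
    let UA := ((1 : Matrix (Fin 2) (Fin 2) ℂ) ⊗ₖ
        (hadamardPow m ⊗ₖ (1 : Matrix (Fin (2 ^ n)) (Fin (2 ^ n)) ℂ))) *
      ((1 : Matrix (Fin 2) (Fin 2) ℂ) ⊗ₖ Oc) * OA *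
      ((1 : Matrix (Fin 2) (Fin 2) ℂ) ⊗ₖ
        (hadamardPow m ⊗ₖ (1 : Matrix (Fin (2 ^ n)) (Fin (2 ^ n)) ℂ)))
    ∀ i j : Fin (2 ^ n),
      UA (0, (⟨0, pow_pos (by norm_num) m⟩, i)) (0, (⟨0, pow_pos (by norm_num) m⟩, j)) =
        A i j / (2 ^ m : ℂ) := by
  intro UA i j
  have hOA_col : ∀ ℓ x, OA (0, x) (0, (ℓ, j)) = if x = (ℓ, j) then A (c j ℓ) j else 0 := by
    intro ℓ x
    have h := congrFun (hOA ℓ j) (0, x)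
    simp only [← Pi.single_apply, mulVec_single_one] at h
    simpa [Pi.single_apply] using h
  have hblock : ∀ ℓ ℓ', (((1 : Matrix (Fin 2) (Fin 2) ℂ) ⊗ₖ Oc) * OA) (0, (ℓ, i)) (0, (ℓ', j)) =
      if ℓ = ℓ' then (if c j ℓ' = i then A i j else 0) else 0 := by
    intro ℓ ℓ'
    simp only [one_kronecker_mul_apply, hOA_col, mul_ite, mul_zero, Finset.sum_ite_eq',
      Finset.mem_univ, if_true, hOc]
    split_ifs <;> simp_all
  simp only [UA, Matrix.mul_assoc _ (1 ⊗ₖ Oc) OA]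
  rw [kronecker_one_sandwich_apply _ _ _ _ (hadamardPow_apply_zero_left m)
    (hadamardPow_apply_zero_right m), ofReal_one_div_sqrt_mul_self]
  simp only [hblock, Finset.sum_ite_eq, Finset.mem_univ, if_true]
  rw [sum_ite_eq_self_of_injective (hinj j) (hcover i j), one_div_mul_eq_div]
end
end

section
/- Let p, q, r, s be distinct indices with p < q and r > s, and let |j⟩ be an occupation basis state with j_p = 0, j_q = 0, j_r = 1, j_s = 1. Then a_p† a_q† a_r a_s |j⟩ = (−1)^{d_{j',p,q} + d_{j,r,s}} |FLIP(FLIP(j;r,s);p,q)⟩, where j' = FLIP(j;r,s), d_{j,r,s} = j_{s+1} + ⋯ + j_{r−1}, and d_{j',p,q} = j'_{p+1} + ⋯ + j'_{q−1}. -/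
noncomputable section

/-- Flip bits `p` and `q` of the bit string `j` (if `p = q` this is the identity). -/
def flipBits {n : ℕ} (j : Fin n → Bool) (p q : Fin n) : Fin n → Bool :=
  fun i => Bool.xor (Bool.xor (j i) (decide (i = p))) (decide (i = q))

/-- The occupation-number basis state `a_{f_0}† a_{f_1}† ⋯ a_{f_{η−1}}† |vac⟩`,
where `f_0 < f_1 < ⋯` are the positions occupied in `j`. -/
def occState {n : ℕ} {V : Type*} [AddCommGroup V] [Module ℂ V]
    (cr : Fin n → V →ₗ[ℂ] V) (vac : V) (j : Fin n → Bool) : V :=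
  (((List.finRange n).filter (fun p => j p)).foldr (fun p v => cr p v) vac)

/-! Each operator adds or removes one site of the increasingly ordered list of occupied sites,
and moving it past the creation operators of the occupied sites below that site costs the sign
`(-1) ^ numBelow`. The counts below `r` and below `s` differ by `d_{j,r,s}`, those below `q` and
below `p` by `d_{j',p,q}`; the counts below `s` and below `p` each occur twice and cancel. -/

namespace Fermion

open Function

section Lists

variable {R V ι : Type*} [Ring R] [AddCommGroup V] [Module R V]
  (cr an : ι → V →ₗ[R] V) (vac : V)

theorem an_cr_apply [DecidableEq ι]
    (hmix : ∀ p q, an p ∘ₗ cr q + cr q ∘ₗ an p = if p = q then LinearMap.id else 0)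
    (r a : ι) (w : V) : an r (cr a w) = (if r = a then w else 0) - cr a (an r w) := by
  rw [eq_sub_iff_add_eq]
  simpa [apply_ite (fun φ : V →ₗ[R] V => φ w)] using LinearMap.congr_fun (hmix r a) w

theorem cr_cr_apply (hcr : ∀ p q, cr p ∘ₗ cr q + cr q ∘ₗ cr p = 0) (p a : ι) (w : V) :
    cr p (cr a w) = -cr a (cr p w) :=
  eq_neg_of_add_eq_zero_left (LinearMap.congr_fun (hcr p a) w)

theorem an_foldr_cr_of_notMem [DecidableEq ι]
    (hmix : ∀ p q, an p ∘ₗ cr q + cr q ∘ₗ an p = if p = q then LinearMap.id else 0)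
    (hvac : ∀ p, an p vac = 0) {r : ι} {L : List ι} (hr : r ∉ L) :
    an r (L.foldr (fun p v => cr p v) vac) = 0 := by
  induction L with
  | nil => exact hvac r
  | cons a T ih =>
    rw [List.mem_cons, not_or] at hr
    rw [List.foldr_cons, an_cr_apply cr an hmix, if_neg hr.1, ih hr.2, map_zero, sub_zero]

theorem an_foldr_cr_of_mem [LinearOrder ι]
    (hmix : ∀ p q, an p ∘ₗ cr q + cr q ∘ₗ an p = if p = q then LinearMap.id else 0)
    (hvac : ∀ p, an p vac = 0) {r : ι} {L : List ι} (hL : L.Pairwise (· < ·)) (hr : r ∈ L) :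
    an r (L.foldr (fun p v => cr p v) vac) =
      (-1 : R) ^ (L.filter (· < r)).length • (L.erase r).foldr (fun p v => cr p v) vac := by
  induction L with
  | nil => simp at hr
  | cons a T ih =>
    rw [List.pairwise_cons] at hL
    obtain rfl | hrT := List.mem_cons.mp hr
    · have hrT : r ∉ T := fun h => lt_irrefl r (hL.1 r h)
      have hT : T.filter (· < r) = [] := List.filter_eq_nil_iff.mpr fun b hb => by
        simpa using (hL.1 b hb).le
      rw [List.foldr_cons, an_cr_apply cr an hmix, if_pos rfl,
        an_foldr_cr_of_notMem cr an vac hmix hvac hrT]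
      simp [hT]
    · have har : a < r := hL.1 r hrT
      rw [List.foldr_cons, an_cr_apply cr an hmix, if_neg har.ne', ih hL.2 hrT,
        List.erase_cons_tail (by simpa using har.ne)]
      simp [har, pow_succ]

theorem cr_foldr_cr_erase [LinearOrder ι] (hcr : ∀ p q, cr p ∘ₗ cr q + cr q ∘ₗ cr p = 0)
    {p : ι} {L : List ι} (hL : L.Pairwise (· < ·)) (hp : p ∈ L) :
    cr p ((L.erase p).foldr (fun p v => cr p v) vac) =
      (-1 : R) ^ (L.filter (· < p)).length • L.foldr (fun p v => cr p v) vac := by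
  induction L with
  | nil => simp at hp
  | cons a T ih =>
    rw [List.pairwise_cons] at hL
    obtain rfl | hpT := List.mem_cons.mp hp
    · have hT : T.filter (· < p) = [] := List.filter_eq_nil_iff.mpr fun b hb => by
        simpa using (hL.1 b hb).le
      simp [hT]
    · have hap : a < p := hL.1 p hpT
      rw [List.erase_cons_tail (by simpa using hap.ne), List.foldr_cons, cr_cr_apply cr hcr,
        ih hL.2 hpT]
      simp [hap, pow_succ]

end Lists

section BitStrings

variable {n : ℕ}

def occupied (f : Fin n → Bool) : List (Fin n) := (List.finRange n).filter (f ·)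

def numBelow (f : Fin n → Bool) (x : Fin n) : ℕ := ((Finset.Iio x).filter (f · = true)).card

theorem pairwise_lt_occupied (f : Fin n → Bool) : (occupied f).Pairwise (· < ·) :=
  (List.pairwise_lt_finRange n).filter _

theorem mem_occupied {f : Fin n → Bool} {i : Fin n} : i ∈ occupied f ↔ f i = true := by
  simp [occupied]

theorem occupied_erase (f : Fin n → Bool) (x : Fin n) :
    (occupied f).erase x = occupied (update f x false) := by
  rw [(pairwise_lt_occupied f).nodup.erase_eq_filter, occupied, List.filter_filter]
  congr 1
  funext i
  by_cases h : i = x <;> simp [h]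

theorem length_filter_lt_occupied (f : Fin n → Bool) (x : Fin n) :
    ((occupied f).filter (· < x)).length = numBelow f x := by
  rw [← List.toFinset_card_of_nodup ((pairwise_lt_occupied f).nodup.filter _), numBelow]
  congr 1
  ext i
  simp [occupied, and_comm]

theorem numBelow_update_of_le (f : Fin n → Bool) {x y : Fin n} (hxy : x ≤ y) (b : Bool) :
    numBelow (update f y b) x = numBelow f x := by
  unfold numBelow
  congr 1
  refine Finset.filter_congr fun i hi => ?_
  rw [update_of_ne ((Finset.mem_Iio.mp hi).trans_le hxy).ne]

theorem numBelow_eq_add_card_Ioo (f : Fin n → Bool) {x y : Fin n} (hxy : x < y)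
    (hx : f x = false) :
    numBelow f y = numBelow f x + ((Finset.Ioo x y).filter (f · = true)).card := by
  unfold numBelow
  rw [← Finset.card_union_of_disjoint]
  · congr 1
    ext i
    simp only [Finset.mem_filter, Finset.mem_Iio, Finset.mem_union, Finset.mem_Ioo]
    rcases lt_trichotomy i x with h | rfl | h
    · simp [h, h.trans hxy]
    · simp [hx]
    · simp [h, h.not_gt]
  · exact Finset.disjoint_filter_filter <| Finset.disjoint_left.mpr fun i hi hi' =>
      (Finset.mem_Iio.mp hi).not_gt (Finset.mem_Ioo.mp hi').1

theorem numBelow_update_false (f : Fin n → Bool) {x y : Fin n} (hxy : x < y) :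
    numBelow (update f x false) y =
      numBelow f x + ((Finset.Ioo x y).filter (f · = true)).card := by
  rw [numBelow_eq_add_card_Ioo _ hxy (update_self x false f), numBelow_update_of_le f le_rfl]
  congr 2
  exact Finset.filter_congr fun i hi => by rw [update_of_ne (Finset.mem_Ioo.mp hi).1.ne']

theorem flipBits_eq_update (j : Fin n → Bool) {a b : Fin n} (hab : a ≠ b) :
    flipBits j a b = update (update j b (!j b)) a (!j a) := by
  funext i
  by_cases ha : i = a <;> by_cases hb : i = b <;> simp_all [flipBits]

variable {V : Type*} [AddCommGroup V] [Module ℂ V] (cr an : Fin n → V →ₗ[ℂ] V) (vac : V)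

theorem occState_eq_foldr_occupied (f : Fin n → Bool) :
    occState cr vac f = (occupied f).foldr (fun p v => cr p v) vac :=
  rfl

theorem an_occState
    (hmix : ∀ p q, an p ∘ₗ cr q + cr q ∘ₗ an p = if p = q then LinearMap.id else 0)
    (hvac : ∀ p, an p vac = 0) {f : Fin n → Bool} {x : Fin n} (hx : f x = true) :
    an x (occState cr vac f) =
      (-1 : ℂ) ^ numBelow f x • occState cr vac (update f x false) := by
  rw [occState_eq_foldr_occupied, an_foldr_cr_of_mem cr an vac hmix hvac
    (pairwise_lt_occupied f) (mem_occupied.mpr hx), occupied_erase, length_filter_lt_occupied,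
    occState_eq_foldr_occupied]

theorem cr_occState (hcr : ∀ p q, cr p ∘ₗ cr q + cr q ∘ₗ cr p = 0) {f : Fin n → Bool}
    {x : Fin n} (hx : f x = false) :
    cr x (occState cr vac f) = (-1 : ℂ) ^ numBelow f x • occState cr vac (update f x true) := by
  have h := cr_foldr_cr_erase cr vac hcr (pairwise_lt_occupied (update f x true))
    (mem_occupied.mpr (update_self x true f))
  rwa [occupied_erase, update_idem, update_eq_self_iff.mpr hx.symm, length_filter_lt_occupied,
    numBelow_update_of_le f le_rfl] at h

end BitStrings

end Fermion

open Fermion Function in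
theorem two_body_phase_general {n : ℕ} {V : Type*} [AddCommGroup V] [Module ℂ V]
    (cr an : Fin n → V →ₗ[ℂ] V) (vac : V)
    (hmix : ∀ p q : Fin n, an p ∘ₗ cr q + cr q ∘ₗ an p
      = if p = q then (LinearMap.id : V →ₗ[ℂ] V) else 0)
    (hcr : ∀ p q : Fin n, cr p ∘ₗ cr q + cr q ∘ₗ cr p = 0)
    (hvac : ∀ p : Fin n, an p vac = 0)
    (j : Fin n → Bool) (p q r s : Fin n) (hpq : p < q) (hsr : s < r)
    (hjp : j p = false) (hjq : j q = false) (hjr : j r = true) (hjs : j s = true) :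
    cr p (cr q (an r (an s (occState cr vac j)))) =
      ((-1 : ℂ) ^
          ((((Finset.Ioo p q).filter (fun i => flipBits j r s i = true)).card) +
            (((Finset.Ioo s r).filter (fun i => j i = true)).card))) •
        occState cr vac (flipBits (flipBits j r s) p q) := by
  set j' := flipBits j r s
  have hj' : j' = update (update j s false) r false := by
    simpa [hjr, hjs] using flipBits_eq_update j hsr.ne'
  have hj'p : j' p = false := by simp [hj', update_apply, hjp]
  have hj'q : j' q = false := by simp [hj', update_apply, hjq]
  have hflip : flipBits j' p q = update (update j' q true) p true := by
    simpa [hj'p, hj'q] using flipBits_eq_update j' hpq.ne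
  rw [an_occState cr an vac hmix hvac hjs, map_smul,
    an_occState cr an vac hmix hvac (by rwa [update_of_ne hsr.ne']), ← hj']
  simp only [map_smul]
  rw [cr_occState cr vac hcr hj'q]
  simp only [map_smul]
  rw [cr_occState cr vac hcr (by rwa [update_of_ne hpq.ne]), ← hflip, smul_smul, smul_smul,
    smul_smul, numBelow_update_of_le j' hpq.le, numBelow_eq_add_card_Ioo j' hpq hj'p,
    numBelow_update_false j hsr, ← pow_add, ← pow_add, ← pow_add]
  congr 1
  rw [show ∀ a b c d : ℕ, a + (a + d) + (b + c) + b = c + d + 2 * (a + b) by intros; ring,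
    pow_add, pow_mul, neg_one_sq, one_pow, mul_one]

/-- For distinct `p, q, r, s` with `p < q`, `s < r`, and `j_p = j_q = 0`, `j_r = j_s = 1`:
`a_p† a_q† a_r a_s |j⟩ = (−1)^{d_{j',p,q} + d_{j,r,s}} |FLIP(FLIP(j;r,s);p,q)⟩`,
where `j' = FLIP(j;r,s)`, `d_{j,r,s} = j_{s+1} + ⋯ + j_{r−1}`,
`d_{j',p,q} = j'_{p+1} + ⋯ + j'_{q−1}`. -/
theorem two_body_phase {n : ℕ} {V : Type*} [AddCommGroup V] [Module ℂ V]
    (cr an : Fin n → V →ₗ[ℂ] V) (vac : V)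
    (hmix : ∀ p q : Fin n, an p ∘ₗ cr q + cr q ∘ₗ an p
      = if p = q then (LinearMap.id : V →ₗ[ℂ] V) else 0)
    (han : ∀ p q : Fin n, an p ∘ₗ an q + an q ∘ₗ an p = 0)
    (hcr : ∀ p q : Fin n, cr p ∘ₗ cr q + cr q ∘ₗ cr p = 0)
    (hvac : ∀ p : Fin n, an p vac = 0)
    (j : Fin n → Bool) (p q r s : Fin n) (hpq : p < q) (hsr : s < r)
    (hpr : p ≠ r) (hps : p ≠ s) (hqr : q ≠ r) (hqs : q ≠ s)
    (hjp : j p = false) (hjq : j q = false) (hjr : j r = true) (hjs : j s = true) :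
    cr p (cr q (an r (an s (occState cr vac j)))) =
      ((-1 : ℂ) ^
          ((((Finset.Ioo p q).filter (fun i => flipBits j r s i = true)).card) +
            (((Finset.Ioo s r).filter (fun i => j i = true)).card))) •
        occState cr vac (flipBits (flipBits j r s) p q) :=
  two_body_phase_general cr an vac hmix hcr hvac j p q r s hpq hsr hjp hjq hjr hjs

end
end

section
/- Let U(t) = [[t, √(1−t²)], [√(1−t²), −t]] for t ∈ [−1,1] and for phases Φ = (φ₀,…,φ_d) define U_Φ(t) = (−i)^d e^{iφ₀Z} Π_{j=1}^d [U(t) e^{iφ_j Z}]. If U_Φ(t) = [[p(t), −q(t)√(1−t²)], [q*(t)√(1−t²), p*(t)]] for polynomials p, q, then: deg(p) ≤ d, deg(q) ≤ d−1, p has parity d mod 2, q has parity (d−1) mod 2, and |p(t)|² + (1−t²)|q(t)|² = 1 for all t ∈ [−1,1]. -/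
noncomputable section

/-- The signal unitary `U(t) = [[t, √(1−t²)], [√(1−t²), −t]]`. -/
def signalU (t : ℝ) : Matrix (Fin 2) (Fin 2) ℂ :=
  !![(t : ℂ), ((Real.sqrt (1 - t ^ 2) : ℝ) : ℂ);
     ((Real.sqrt (1 - t ^ 2) : ℝ) : ℂ), (-(t : ℂ))]

/-- The phase rotation `e^{iφZ} = diag(e^{iφ}, e^{−iφ})`. -/
def phaseZ (φ : ℝ) : Matrix (Fin 2) (Fin 2) ℂ :=
  !![Complex.exp (Complex.I * φ), 0; 0, Complex.exp (-(Complex.I * φ))]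

/-- The QSP unitary `U_Φ(t) = (−i)^d e^{iφ₀Z} Π_{j=1}^d [U(t) e^{iφ_j Z}]`. -/
def qspU (d : ℕ) (Φ : Fin (d + 1) → ℝ) (t : ℝ) : Matrix (Fin 2) (Fin 2) ℂ :=
  ((-Complex.I) ^ d) •
    (phaseZ (Φ 0) * ((List.finRange d).map fun j => signalU t * phaseZ (Φ j.succ)).prod)

/-
Write `s = √(1 - t²)`. Left multiplication by `(-i) e^{iφZ} U(t)` sends a matrix
`[[P, -Q s], [Q* s, P*]]` to one of the same shape, with
`P ↦ -i e^{iφ} (t P + (1 - t²) Q*)` and `Q ↦ i e^{iφ} (P* - t Q)`, because `s² = 1 - t²`.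
This raises both degree bounds by one and flips both parities, so induction on `d` writes
`U_Φ(t)` in this shape with polynomials of the claimed degrees and parities; they are `p` and `q`,
since polynomials agreeing on `(-1, 1)` are equal (for `q`, cancel `s ≠ 0`). Finally
`|p|² + (1 - t²)|q|²` is `det U_Φ(t) = 1`, as `det e^{iφZ} = 1` and `det ((-i) U(t)) = 1`.
-/

open Polynomial Complex ComplexConjugate

section ParityDegree

variable (R : Type*) [Semiring R]

/-- Polynomials of degree `< n` and parity `n - 1`, written `n + 1` to avoid truncated
subtraction. -/
def parityDegreeLT (n : ℕ) : Submodule R R[X] where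
  carrier := {P | ∀ k, P.coeff k ≠ 0 → k < n ∧ k ≡ n + 1 [MOD 2]}
  zero_mem' k hk := absurd (coeff_zero k) hk
  add_mem' {P Q} hP hQ k hk := by
    rw [coeff_add] at hk
    by_cases hPk : P.coeff k = 0
    · exact hQ k (by simpa [hPk] using hk)
    · exact hP k hPk
  smul_mem' c P hP k hk := hP k (right_ne_zero_of_mul (by simpa using hk))

variable {R}

theorem C_mem_parityDegreeLT_one (a : R) : C a ∈ parityDegreeLT R 1 := by
  intro k hk
  obtain rfl : k = 0 := by contrapose! hk; exact coeff_C_of_ne_zero hk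
  exact ⟨zero_lt_one, rfl⟩

theorem X_mul_mem_parityDegreeLT {P : R[X]} {n : ℕ} (hP : P ∈ parityDegreeLT R n) :
    X * P ∈ parityDegreeLT R (n + 1) := by
  rintro (_ | k) hk
  · exact absurd (coeff_X_mul_zero P) hk
  · rw [coeff_X_mul] at hk
    obtain ⟨hlt, hmod⟩ := hP k hk
    exact ⟨Nat.succ_lt_succ hlt, hmod.add_right 1⟩

theorem parityDegreeLT_le_add_two (n : ℕ) : parityDegreeLT R n ≤ parityDegreeLT R (n + 2) :=
  fun _ hP k hk ↦ ⟨(hP k hk).1.trans_le (Nat.le_add_right n 2),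
    (hP k hk).2.trans (Nat.add_mod_right (n + 1) 2).symm⟩

theorem map_mem_parityDegreeLT {S : Type*} [Semiring S] (f : R →+* S) {P : R[X]} {n : ℕ}
    (hP : P ∈ parityDegreeLT R n) : P.map f ∈ parityDegreeLT S n :=
  fun k hk ↦ hP k fun h ↦ hk (by rw [coeff_map, h, map_zero])

theorem coeff_eq_zero_of_mem_parityDegreeLT {P : R[X]} {n k : ℕ} (hP : P ∈ parityDegreeLT R n)
    (hk : n ≤ k) : P.coeff k = 0 :=
  by_contra fun h ↦ (hP k h).1.not_ge hk

end ParityDegree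

theorem Polynomial.eval_map_conj_ofReal (P : ℂ[X]) (t : ℝ) :
    (P.map (starRingEnd ℂ)).eval (t : ℂ) = conj (P.eval (t : ℂ)) := by
  rw [eval_map, ← eval₂_at_apply, conj_ofReal]

theorem Polynomial.eq_of_eval_ofReal_eq {P Q : ℂ[X]} {s : Set ℝ} (hs : s.Infinite)
    (h : ∀ t ∈ s, P.eval (t : ℂ) = Q.eval (t : ℂ)) : P = Q :=
  eq_of_infinite_eval_eq P Q <| (hs.image ofReal_injective.injOn).mono <| by
    rintro _ ⟨t, ht, rfl⟩
    exact h t ht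

theorem conj_exp_I_mul_ofReal (φ : ℝ) : conj (exp (I * φ)) = exp (-(I * φ)) := by
  rw [← exp_conj, map_mul, conj_I, conj_ofReal, neg_mul]

theorem ofReal_sqrt_one_sub_sq_sq {t : ℝ} (ht : t ∈ Set.Icc (-1 : ℝ) 1) :
    ((Real.sqrt (1 - t ^ 2) : ℝ) : ℂ) ^ 2 = 1 - (t : ℂ) ^ 2 := by
  rw [← ofReal_pow, Real.sq_sqrt (by nlinarith [ht.1, ht.2])]
  push_cast
  ring

def qspForm (P Q : ℂ[X]) (t : ℝ) : Matrix (Fin 2) (Fin 2) ℂ :=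
  !![P.eval (t : ℂ),
     -(Q.eval (t : ℂ)) * ((Real.sqrt (1 - t ^ 2) : ℝ) : ℂ);
     ((Q.map (starRingEnd ℂ)).eval (t : ℂ)) * ((Real.sqrt (1 - t ^ 2) : ℝ) : ℂ),
     (P.map (starRingEnd ℂ)).eval (t : ℂ)]

theorem qspForm_injOn {P Q P' Q' : ℂ[X]}
    (h : ∀ t ∈ Set.Icc (-1 : ℝ) 1, qspForm P Q t = qspForm P' Q' t) : P = P' ∧ Q = Q' := by
  refine ⟨eq_of_eval_ofReal_eq (Set.Ioo_infinite (by norm_num : (-1 : ℝ) < 1)) fun t ht ↦ ?_,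
    eq_of_eval_ofReal_eq (Set.Ioo_infinite (by norm_num : (-1 : ℝ) < 1)) fun t ht ↦ ?_⟩
  · simpa [qspForm] using congrFun₂ (h t (Set.Ioo_subset_Icc_self ht)) 0 0
  · have hs : ((Real.sqrt (1 - t ^ 2) : ℝ) : ℂ) ≠ 0 :=
      ofReal_ne_zero.mpr (Real.sqrt_pos.mpr (by nlinarith [ht.1, ht.2])).ne'
    simpa [qspForm, hs] using congrFun₂ (h t (Set.Ioo_subset_Icc_self ht)) 0 1

theorem det_qspForm (P Q : ℂ[X]) {t : ℝ} (ht : t ∈ Set.Icc (-1 : ℝ) 1) :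
    (qspForm P Q t).det =
      ((‖P.eval (t : ℂ)‖ ^ 2 + (1 - t ^ 2) * ‖Q.eval (t : ℂ)‖ ^ 2 : ℝ) : ℂ) := by
  rw [qspForm, Matrix.det_fin_two_of, eval_map_conj_ofReal, eval_map_conj_ofReal]
  push_cast
  rw [← mul_conj', ← mul_conj', ← ofReal_sqrt_one_sub_sq_sq ht]
  ring

theorem det_phaseZ (φ : ℝ) : (phaseZ φ).det = 1 := by
  rw [phaseZ, Matrix.det_fin_two_of, mul_zero, sub_zero, ← exp_add, add_neg_cancel, exp_zero]

theorem det_signalU {t : ℝ} (ht : t ∈ Set.Icc (-1 : ℝ) 1) : (signalU t).det = -1 := by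
  rw [signalU, Matrix.det_fin_two_of, ← sq, ofReal_sqrt_one_sub_sq_sq ht]
  ring

theorem qspU_zero (Φ : Fin 1 → ℝ) (t : ℝ) : qspU 0 Φ t = phaseZ (Φ 0) := by
  simp [qspU]

theorem qspU_succ (d : ℕ) (Φ : Fin (d + 2) → ℝ) (t : ℝ) :
    qspU (d + 1) Φ t = ((-I) • (phaseZ (Φ 0) * signalU t)) * qspU d (Fin.tail Φ) t := by
  simp only [qspU, List.finRange_succ, List.map_cons, List.map_map, List.prod_cons,
    Matrix.smul_mul, Matrix.mul_smul, smul_smul, pow_succ, Matrix.mul_assoc]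
  rfl

theorem det_qspU (d : ℕ) (Φ : Fin (d + 1) → ℝ) {t : ℝ} (ht : t ∈ Set.Icc (-1 : ℝ) 1) :
    (qspU d Φ t).det = 1 := by
  induction d with
  | zero => rw [qspU_zero, det_phaseZ]
  | succ d ih =>
    rw [qspU_succ, Matrix.det_mul, ih, Matrix.det_smul, Matrix.det_mul, det_phaseZ,
      det_signalU ht, Fintype.card_fin]
    simp

def qspStepPolys (φ : ℝ) (PQ : ℂ[X] × ℂ[X]) : ℂ[X] × ℂ[X] :=
  (C (-I * exp (I * φ)) * (X * PQ.1 + (1 - X ^ 2) * PQ.2.map (starRingEnd ℂ)),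
   C (I * exp (I * φ)) * (PQ.1.map (starRingEnd ℂ) - X * PQ.2))

theorem qspStep_mul_qspForm (φ : ℝ) (PQ : ℂ[X] × ℂ[X]) {t : ℝ}
    (ht : t ∈ Set.Icc (-1 : ℝ) 1) :
    ((-I) • (phaseZ φ * signalU t)) * qspForm PQ.1 PQ.2 t =
      qspForm (qspStepPolys φ PQ).1 (qspStepPolys φ PQ).2 t := by
  have hs := ofReal_sqrt_one_sub_sq_sq ht
  ext i j
  fin_cases i <;> fin_cases j <;>
    simp [qspForm, qspStepPolys, phaseZ, signalU, Matrix.mul_apply, eval_map_conj_ofReal,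
      conj_exp_I_mul_ofReal]
  · linear_combination (-I * exp (I * φ) * conj (PQ.2.eval (t : ℂ))) * hs
  · ring
  · ring
  · linear_combination (I * exp (-(I * φ)) * PQ.2.eval (t : ℂ)) * hs

def qspPolys : (d : ℕ) → (Fin (d + 1) → ℝ) → ℂ[X] × ℂ[X]
  | 0, Φ => (C (exp (I * Φ 0)), 0)
  | d + 1, Φ => qspStepPolys (Φ 0) (qspPolys d (Fin.tail Φ))

theorem qspU_eq_qspForm (d : ℕ) (Φ : Fin (d + 1) → ℝ) {t : ℝ} (ht : t ∈ Set.Icc (-1 : ℝ) 1) :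
    qspU d Φ t = qspForm (qspPolys d Φ).1 (qspPolys d Φ).2 t := by
  induction d with
  | zero =>
    rw [qspU_zero, phaseZ, qspForm]
    simp [qspPolys, conj_exp_I_mul_ofReal]
  | succ d ih => rw [qspU_succ, ih, qspPolys, qspStep_mul_qspForm _ _ ht]

theorem qspPolys_mem_parityDegreeLT (d : ℕ) (Φ : Fin (d + 1) → ℝ) :
    (qspPolys d Φ).1 ∈ parityDegreeLT ℂ (d + 1) ∧ (qspPolys d Φ).2 ∈ parityDegreeLT ℂ d := by
  induction d with
  | zero => exact ⟨C_mem_parityDegreeLT_one _, zero_mem _⟩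
  | succ d ih =>
    obtain ⟨hP, hQ⟩ := ih (Fin.tail Φ)
    set P := (qspPolys d (Fin.tail Φ)).1
    set Q := (qspPolys d (Fin.tail Φ)).2
    have hP' := map_mem_parityDegreeLT (starRingEnd ℂ) hP
    have hQ' := map_mem_parityDegreeLT (starRingEnd ℂ) hQ
    rw [qspPolys, qspStepPolys, ← smul_eq_C_mul, ← smul_eq_C_mul,
      show (1 - X ^ 2) * Q.map (starRingEnd ℂ) =
        Q.map (starRingEnd ℂ) - X * (X * Q.map (starRingEnd ℂ)) by ring]
    exact ⟨Submodule.smul_mem _ _ <| add_mem (X_mul_mem_parityDegreeLT hP) <|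
        sub_mem (parityDegreeLT_le_add_two d hQ')
          (X_mul_mem_parityDegreeLT (X_mul_mem_parityDegreeLT hQ')),
      Submodule.smul_mem _ _ <| sub_mem hP' (X_mul_mem_parityDegreeLT hQ)⟩

/-- Necessity direction of the quantum signal processing theorem: if
`U_Φ(t) = [[p(t), −q(t)√(1−t²)], [q*(t)√(1−t²), p*(t)]]` on `[−1,1]` for polynomials
`p, q`, then `deg p ≤ d`, `deg q ≤ d−1`, `p` has parity `d mod 2`, `q` has parity
`(d−1) mod 2`, and `|p(t)|² + (1−t²)|q(t)|² = 1` for all `t ∈ [−1,1]`. -/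
theorem qsp_necessity (d : ℕ) (Φ : Fin (d + 1) → ℝ) (p q : Polynomial ℂ)
    (hU : ∀ t : ℝ, t ∈ Set.Icc (-1 : ℝ) 1 →
      qspU d Φ t =
        !![p.eval (t : ℂ),
           -(q.eval (t : ℂ)) * ((Real.sqrt (1 - t ^ 2) : ℝ) : ℂ);
           ((q.map (starRingEnd ℂ)).eval (t : ℂ)) * ((Real.sqrt (1 - t ^ 2) : ℝ) : ℂ),
           (p.map (starRingEnd ℂ)).eval (t : ℂ)]) :
    p.natDegree ≤ d ∧
    q.degree < (d : WithBot ℕ) ∧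
    (∀ k : ℕ, p.coeff k ≠ 0 → k % 2 = d % 2) ∧
    (∀ k : ℕ, q.coeff k ≠ 0 → k % 2 = (d + 1) % 2) ∧
    (∀ t : ℝ, t ∈ Set.Icc (-1 : ℝ) 1 →
      ‖p.eval (t : ℂ)‖ ^ 2 +
        (1 - t ^ 2) * ‖q.eval (t : ℂ)‖ ^ 2 = 1) := by
  obtain ⟨rfl, rfl⟩ := qspForm_injOn fun t ht ↦ (hU t ht).symm.trans (qspU_eq_qspForm d Φ ht)
  obtain ⟨hp, hq⟩ := qspPolys_mem_parityDegreeLT d Φ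
  refine ⟨natDegree_le_iff_coeff_eq_zero.mpr fun k hk ↦ coeff_eq_zero_of_mem_parityDegreeLT hp hk,
    (degree_lt_iff_coeff_zero _ _).mpr fun k hk ↦
      coeff_eq_zero_of_mem_parityDegreeLT hq (by exact_mod_cast hk),
    fun k hk ↦ (hp k hk).2.trans (Nat.add_mod_right d 2), fun k hk ↦ (hq k hk).2, fun t ht ↦ ?_⟩
  have h := det_qspU d Φ ht
  rwa [qspU_eq_qspForm d Φ ht, det_qspForm _ _ ht, ofReal_eq_one] at h
end
end
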